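/- arXiv:1009.2948 — 5 statements merged into one kernel-verified Lean document; each statement's English description precedes it below -/
import Mathlib

section
/- Let D ⊂ ℝⁿ be a bounded domain and p ∈ D. The function f_p : S^{n-1} → ℝ₊, assigning to each unit vector v the length of the connected component of (p + ℝv) ∩ D containing p, is lower-semicontinuous; consequently f_p attains its minimum on S^{n-1}. -/
/-!
Let `S_v = {t | p + t • v ∈ D}`, so that `f_p(v)` is the length of the component of `S_v`
containing `0`. If `f_p(v) > c`, that component contains a compact interval `[a, b] ∋ 0` of
length `> c`; the segment `p + [a, b] • v` is a compact subset of the open set `D`, so by the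
tube lemma `p + [a, b] • w ⊆ D` for all `w` near `v`, and then `f_p(w) ≥ b - a > c`.
Boundedness of `D` keeps all lengths finite, and the sphere is compact.
-/

open Metric MeasureTheory

/-- For a point `p` and a unit vector `v`, the length of the connected component of
`(p + ℝ v) ∩ D` containing `p`, computed as the Lebesgue measure of the corresponding
set of parameters `t` (its connected component containing `0`). -/
noncomputable def segLen {n : ℕ} (D : Set (EuclideanSpace ℝ (Fin n)))
    (p v : EuclideanSpace ℝ (Fin n)) : ℝ :=
  (volume (connectedComponentIn {t : ℝ | p + t • v ∈ D} 0)).toReal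

open scoped ENNReal
open Topology Filter Set

theorem IsPreconnected.exists_Icc_subset_lt_volume {C : Set ℝ} (hC : IsPreconnected C) {x : ℝ}
    (hx : x ∈ C) {r : ℝ≥0∞} (hr : r < volume C) :
    ∃ a b, x ∈ Icc a b ∧ Icc a b ⊆ C ∧ r < volume (Icc a b) := by
  obtain ⟨K, hKC, hK, hrK⟩ := hC.ordConnected.measurableSet.exists_lt_isCompact hr
  have hxK : IsCompact (insert x K) := hK.insert x
  have hsub : insert x K ⊆ C := insert_subset hx hKC
  refine ⟨sInf (insert x K), sSup (insert x K), ?_, ?_, ?_⟩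
  · exact hxK.isBounded.subset_Icc_sInf_sSup (mem_insert x K)
  · exact hC.ordConnected.out (hsub (hxK.sInf_mem (insert_nonempty x K)))
      (hsub (hxK.sSup_mem (insert_nonempty x K)))
  · exact hrK.trans_le
      (measure_mono ((subset_insert x K).trans hxK.isBounded.subset_Icc_sInf_sSup))

theorem IsOpen.eventually_forall_add_smul_mem {E : Type*} [TopologicalSpace E] [AddCommGroup E]
    [Module ℝ E] [ContinuousAdd E] [ContinuousSMul ℝ E] {D : Set E} (hD : IsOpen D)
    {K : Set ℝ} (hK : IsCompact K) {p v : E} (h : ∀ t ∈ K, p + t • v ∈ D) :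
    ∀ᶠ w in 𝓝 v, ∀ t ∈ K, p + t • w ∈ D :=
  hK.eventually_forall_of_forall_eventually fun t ht =>
    (continuous_const.add (continuous_snd.smul continuous_fst)).continuousAt.eventually
      (hD.mem_nhds (h t ht))

theorem lowerSemicontinuous_volume_connectedComponentIn_add_smul {E : Type*} [TopologicalSpace E]
    [AddCommGroup E] [Module ℝ E] [ContinuousAdd E] [ContinuousSMul ℝ E] {D : Set E}
    (hD : IsOpen D) {p : E} (hp : p ∈ D) :
    LowerSemicontinuous fun v => volume (connectedComponentIn {t : ℝ | p + t • v ∈ D} 0) := by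
  intro v r hr
  obtain ⟨a, b, h0, hsub, hrab⟩ := isPreconnected_connectedComponentIn.exists_Icc_subset_lt_volume
    (mem_connectedComponentIn (by simpa using hp)) hr
  filter_upwards [hD.eventually_forall_add_smul_mem isCompact_Icc
    fun t ht => connectedComponentIn_subset {t : ℝ | p + t • v ∈ D} 0 (hsub ht)] with w hw
  exact hrab.trans_le (measure_mono (isPreconnected_Icc.subset_connectedComponentIn h0 hw))

theorem isBounded_setOf_add_smul_mem {E : Type*} [NormedAddCommGroup E] [NormedSpace ℝ E]
    {D : Set E} (hD : Bornology.IsBounded D) (p : E) {v : E} (hv : v ≠ 0) :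
    Bornology.IsBounded {t : ℝ | p + t • v ∈ D} := by
  have : AntilipschitzWith ‖v‖₊⁻¹ fun t : ℝ => p + t • v := by
    refine AntilipschitzWith.of_le_mul_dist fun s t => ?_
    rw [dist_add_left, dist_eq_norm (s • v), ← sub_smul, norm_smul, ← dist_eq_norm,
      NNReal.coe_inv, coe_nnnorm, mul_left_comm, inv_mul_cancel₀ (norm_ne_zero_iff.2 hv), mul_one]
  exact this.isBounded_preimage hD

theorem LowerSemicontinuousOn.toReal {X : Type*} [TopologicalSpace X] {f : X → ℝ≥0∞} {s : Set X}
    (hf : LowerSemicontinuousOn f s) (hfin : ∀ x ∈ s, f x ≠ ∞) :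
    LowerSemicontinuousOn (fun x => (f x).toReal) s := by
  intro x hx c hc
  rcases lt_or_ge c 0 with hc0 | hc0
  · exact Eventually.of_forall fun y => hc0.trans_le ENNReal.toReal_nonneg
  filter_upwards [hf x hx _ ((ENNReal.ofReal_lt_iff_lt_toReal hc0 (hfin x hx)).2 hc),
    self_mem_nhdsWithin] with y hy hys
  exact (ENNReal.ofReal_lt_iff_lt_toReal hc0 (hfin y hys)).1 hy

theorem lowerSemicontinuousOn_f_and_min_general {n : ℕ} (hn : 0 < n)
    (D : Set (EuclideanSpace ℝ (Fin n)))
    (hOpen : IsOpen D) (hBdd : Bornology.IsBounded D)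
    (p : EuclideanSpace ℝ (Fin n)) (hp : p ∈ D) :
    LowerSemicontinuousOn (segLen D p) (sphere (0 : EuclideanSpace ℝ (Fin n)) 1) ∧
    ∃ v ∈ sphere (0 : EuclideanSpace ℝ (Fin n)) 1,
      ∀ w ∈ sphere (0 : EuclideanSpace ℝ (Fin n)) 1, segLen D p v ≤ segLen D p w := by
  have hfin : ∀ v ∈ sphere (0 : EuclideanSpace ℝ (Fin n)) 1,
      volume (connectedComponentIn {t : ℝ | p + t • v ∈ D} 0) ≠ ∞ := fun v hv =>
    ((isBounded_setOf_add_smul_mem hBdd p (ne_zero_of_mem_unit_sphere ⟨v, hv⟩)).subset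
      (connectedComponentIn_subset _ _)).measure_lt_top.ne
  have hlsc : LowerSemicontinuousOn (segLen D p) (sphere 0 1) :=
    ((lowerSemicontinuous_volume_connectedComponentIn_add_smul hOpen hp).lowerSemicontinuousOn
      _).toReal hfin
  have : Nonempty (Fin n) := ⟨⟨0, hn⟩⟩
  obtain ⟨v, hv, hmin⟩ :=
    hlsc.exists_isMinOn (NormedSpace.sphere_nonempty.2 zero_le_one) (isCompact_sphere 0 1)
  exact ⟨hlsc, v, hv, hmin⟩

/-- for a bounded domain `D ⊂ ℝⁿ` and `p ∈ D`, the function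
`f_p : S^{n-1} → ℝ` is lower semicontinuous, and consequently it attains its
minimum on the sphere. -/
theorem lowerSemicontinuousOn_f_and_min {n : ℕ} (hn : 0 < n)
    (D : Set (EuclideanSpace ℝ (Fin n)))
    (hOpen : IsOpen D) (hNe : D.Nonempty) (hBdd : Bornology.IsBounded D)
    (p : EuclideanSpace ℝ (Fin n)) (hp : p ∈ D) :
    LowerSemicontinuousOn (segLen D p) (sphere (0 : EuclideanSpace ℝ (Fin n)) 1) ∧
    ∃ v ∈ sphere (0 : EuclideanSpace ℝ (Fin n)) 1,
      ∀ w ∈ sphere (0 : EuclideanSpace ℝ (Fin n)) 1, segLen D p v ≤ segLen D p w :=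
  lowerSemicontinuousOn_f_and_min_general hn D hOpen hBdd p hp
end

section
/- Let D ⊂ ℝⁿ be a bounded domain which is moreover convex. Then the function H : D × S^{n-1} → ℝ defined by H(p,v) = f_p(v) is continuous. -/
/-!
On the line through `p ∈ D` in direction `v ≠ 0`, the parameters `t` with `p + t v ∈ D` form an
open interval `(a, b) ∋ 0`, since `D` is open, bounded and convex. Hence
`f_p(v) = b(p, v) + b(p, -v)`, where `b(p, v)` is the exit time of the ray. The exit time is
lower semicontinuous because `D` is open. It is upper semicontinuous because for `t > b(p, v)`
the point `p + t v` lies outside the closure of `D`: otherwise, `p` being interior, the open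
segment from `p` to `p + t v` would lie in `D`, and it contains `p + b(p, v) v`.
-/

open scoped RealInnerProductSpace
open Metric MeasureTheory

open Set Bornology

variable {E : Type*} [NormedAddCommGroup E] [NormedSpace ℝ E] {D : Set E} {p v : E}

def lineParams (D : Set E) (p v : E) : Set ℝ :=
  {t | p + t • v ∈ D}

noncomputable def exitTime (D : Set E) (p v : E) : ℝ :=
  sSup (lineParams D p v)

lemma zero_mem_lineParams (hp : p ∈ D) : (0 : ℝ) ∈ lineParams D p v := by
  simpa [lineParams] using hp

lemma neg_lineParams : -lineParams D p v = lineParams D p (-v) := by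
  ext t
  simp only [Set.mem_neg, lineParams, mem_ofPred_eq, smul_neg, ← neg_smul]

lemma sInf_lineParams : sInf (lineParams D p v) = -exitTime D p (-v) := by
  rw [Real.sInf_def, neg_lineParams, exitTime]

lemma isOpen_lineParams (hD : IsOpen D) : IsOpen (lineParams D p v) :=
  hD.preimage (by fun_prop)

lemma convex_lineParams (hD : Convex ℝ D) : Convex ℝ (lineParams D p v) :=
  (hD.translate_preimage_right p).is_linear_preimage (IsLinearMap.isLinearMap_smul' v)

lemma isBounded_lineParams (hD : IsBounded D) (hv : v ≠ 0) : IsBounded (lineParams D p v) := by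
  obtain ⟨r, hr⟩ := hD.subset_closedBall p
  refine isBounded_iff_forall_norm_le.2 ⟨r / ‖v‖, fun t ht => ?_⟩
  have := hr ht
  rw [mem_closedBall, dist_eq_norm, add_sub_cancel_left, norm_smul] at this
  exact (le_div_iff₀ (norm_pos_iff.2 hv)).2 this

section OpenBoundedConvex

variable (hO : IsOpen D) (hB : IsBounded D) (hC : Convex ℝ D)
include hO hB hC

lemma lineParams_eq_Ioo (hp : p ∈ D) (hv : v ≠ 0) :
    lineParams D p v = Ioo (sInf (lineParams D p v)) (exitTime D p v) := by
  have hS := isBounded_lineParams (p := p) hB hv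
  refine Subset.antisymm ?_ <| ((convex_lineParams hC).isConnected
    ⟨0, zero_mem_lineParams hp⟩).Ioo_csInf_csSup_subset hS.bddBelow hS.bddAbove
  rw [← interior_Icc]
  exact (isOpen_lineParams hO).subset_interior_iff.2
    (subset_Icc_csInf_csSup hS.bddBelow hS.bddAbove)

lemma lt_exitTime_iff (hp : p ∈ D) (hv : v ≠ 0) {t : ℝ} (ht : 0 ≤ t) :
    t < exitTime D p v ↔ p + t • v ∈ D := by
  have h0 := zero_mem_lineParams (v := v) hp
  rw [lineParams_eq_Ioo hO hB hC hp hv] at h0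
  change _ ↔ t ∈ lineParams D p v
  rw [lineParams_eq_Ioo hO hB hC hp hv]
  exact ⟨fun h => ⟨h0.1.trans_le ht, h⟩, And.right⟩

lemma exitTime_pos (hp : p ∈ D) (hv : v ≠ 0) : 0 < exitTime D p v :=
  (lt_exitTime_iff hO hB hC hp hv le_rfl).2 (by simpa using hp)

lemma add_smul_notMem_closure_of_exitTime_lt (hp : p ∈ D) (hv : v ≠ 0) {t : ℝ}
    (ht : exitTime D p v < t) : p + t • v ∉ closure D := by
  intro hcl
  set b := exitTime D p v
  have hb : 0 < b := exitTime_pos hO hB hC hp hv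
  have hseg : p + b • v ∈ openSegment ℝ p (p + t • v) := by
    rw [openSegment_eq_image']
    refine ⟨b / t, ⟨div_pos hb (hb.trans ht), (div_lt_one (hb.trans ht)).2 ht⟩, ?_⟩
    rw [add_sub_cancel_left]
    change p + (b / t) • t • v = _
    rw [smul_smul, div_mul_cancel₀ b (hb.trans ht).ne']
  have hbD := hC.openSegment_interior_closure_subset_interior
    (by rwa [hO.interior_eq]) hcl hseg
  rw [hO.interior_eq, ← lt_exitTime_iff hO hB hC hp hv hb.le] at hbD
  exact lt_irrefl b hbD

lemma continuousOn_exitTime :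
    ContinuousOn (fun q : E × E => exitTime D q.1 q.2) (D ×ˢ {0}ᶜ) := by
  rintro ⟨p, v⟩ ⟨hp, hv⟩
  have hb := exitTime_pos hO hB hC hp hv
  refine tendsto_order.2 ⟨fun c hc => ?_, fun c hc => ?_⟩
  · obtain ⟨t, hct, htb⟩ := exists_between (max_lt hc hb)
    have ht0 : 0 ≤ t := (le_max_right c 0).trans hct.le
    have hopen : IsOpen {q : E × E | q.1 + t • q.2 ∈ D} := hO.preimage (by fun_prop)
    filter_upwards [mem_nhdsWithin_of_mem_nhds (hopen.mem_nhds
      ((lt_exitTime_iff hO hB hC hp hv ht0).1 htb)), self_mem_nhdsWithin]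
      with q hqD ⟨hq1, hq2⟩
    exact (le_max_left c 0).trans_lt
      (hct.trans ((lt_exitTime_iff hO hB hC hq1 hq2 ht0).2 hqD))
  · obtain ⟨t, hbt, htc⟩ := exists_between hc
    have hopen : IsOpen {q : E × E | q.1 + t • q.2 ∉ closure D} :=
      isClosed_closure.isOpen_compl.preimage (by fun_prop)
    filter_upwards [mem_nhdsWithin_of_mem_nhds (hopen.mem_nhds
      (add_smul_notMem_closure_of_exitTime_lt hO hB hC hp hv hbt)), self_mem_nhdsWithin]
      with q hq ⟨hq1, hq2⟩
    refine (not_lt.1 fun h => hq (subset_closure ?_)).trans_lt htc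
    exact (lt_exitTime_iff hO hB hC hq1 hq2 (hb.trans hbt).le).1 h

lemma continuousOn_exitTime_add_exitTime_neg :
    ContinuousOn (fun q : E × E => exitTime D q.1 q.2 + exitTime D q.1 (-q.2)) (D ×ˢ {0}ᶜ) :=
  have hcont := continuousOn_exitTime hO hB hC
  hcont.add <| hcont.comp (continuous_fst.prodMk continuous_snd.neg).continuousOn
    fun _ hq => ⟨hq.1, neg_ne_zero.2 hq.2⟩

end OpenBoundedConvex

lemma segLen_eq_exitTime_add_exitTime_neg {n : ℕ} {D : Set (EuclideanSpace ℝ (Fin n))}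
    {p v : EuclideanSpace ℝ (Fin n)} (hO : IsOpen D) (hB : IsBounded D) (hC : Convex ℝ D)
    (hp : p ∈ D) (hv : v ≠ 0) :
    segLen D p v = exitTime D p v + exitTime D p (-v) := by
  have hS : IsPreconnected (lineParams D p v) := (convex_lineParams hC).isPreconnected
  change (volume (connectedComponentIn (lineParams D p v) 0)).toReal = _
  rw [hS.connectedComponentIn (zero_mem_lineParams hp), lineParams_eq_Ioo hO hB hC hp hv,
    Real.volume_Ioo, sInf_lineParams, ENNReal.toReal_ofReal]
  · ring
  · linarith [exitTime_pos hO hB hC hp hv, exitTime_pos hO hB hC hp (neg_ne_zero.2 hv)]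

theorem continuousOn_H_of_convex_general {n : ℕ} (D : Set (EuclideanSpace ℝ (Fin n)))
    (hOpen : IsOpen D) (hBdd : Bornology.IsBounded D)
    (hConv : Convex ℝ D) :
    ContinuousOn
      (fun q : EuclideanSpace ℝ (Fin n) × EuclideanSpace ℝ (Fin n) => segLen D q.1 q.2)
      (D ×ˢ sphere (0 : EuclideanSpace ℝ (Fin n)) 1) := by
  have hsphere : sphere (0 : EuclideanSpace ℝ (Fin n)) 1 ⊆ {0}ᶜ :=
    fun v hv => ne_zero_of_mem_sphere one_ne_zero ⟨v, hv⟩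
  refine ((continuousOn_exitTime_add_exitTime_neg hOpen hBdd hConv).congr fun q hq => ?_).mono
    (prod_mono subset_rfl hsphere)
  exact segLen_eq_exitTime_add_exitTime_neg hOpen hBdd hConv hq.1 hq.2

/-- for a bounded *convex* domain `D ⊂ ℝⁿ`, the function
`H(p, v) = f_p(v)` is continuous on `D × S^{n-1}`. -/
theorem continuousOn_H_of_convex {n : ℕ} (D : Set (EuclideanSpace ℝ (Fin n)))
    (hOpen : IsOpen D) (hNe : D.Nonempty) (hBdd : Bornology.IsBounded D)
    (hConv : Convex ℝ D) :
    ContinuousOn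
      (fun q : EuclideanSpace ℝ (Fin n) × EuclideanSpace ℝ (Fin n) => segLen D q.1 q.2)
      (D ×ˢ sphere (0 : EuclideanSpace ℝ (Fin n)) 1) :=
  continuousOn_H_of_convex_general D hOpen hBdd hConv
end

section
/- Let D ⊂ ℝⁿ be a bounded convex domain, p ∈ D, r = r(p), and let [P,Q] be a segment of length r with P, Q ∈ ∂D and p ∈ [P,Q]. Let v_P and v_Q be supporting unit vectors at P and Q respectively. If v_P and v_Q are parallel, then: v_P = −v_Q; the vector Q − P is parallel to v_P; P and Q are non-corner points (each has a unique supporting unit vector); and r = R, i.e. r(x) ≤ r for every x ∈ D. -/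
/-!
If `v_P = v_Q` then `p` would lie on the supporting hyperplane, so `v_P = -v_Q` and `D` lies in
the open slab between the two hyperplanes. Every chord of direction `v_P` is then at most as long
as the width `⟪P - Q, v_P⟫ ≤ |PQ| = r(p)` of the slab, which gives `r(x) ≤ r(p)` on `D`, and
`r(p) ≤ f_p(v_P)` forces equality in Cauchy–Schwarz, so `P - Q = r(p) v_P`. Were `w ≠ v_P` another
supporting vector at `P`, `D` would lie in the wedge between the hyperplane of `w` at `P` and the
one at `Q`; tilting `v_P` slightly towards `w` gives a chord through `p` shorter than `r(p)`.
-/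

open scoped RealInnerProductSpace
open Metric MeasureTheory

/-- Inaccessibility of `p` in `D`: the infimum (a minimum, by lower semicontinuity)
of `f_p` over the unit sphere. -/
noncomputable def inacc {n : ℕ} (D : Set (EuclideanSpace ℝ (Fin n)))
    (p : EuclideanSpace ℝ (Fin n)) : ℝ :=
  sInf (segLen D p '' sphere (0 : EuclideanSpace ℝ (Fin n)) 1)

/-- `v` is a supporting (unit) vector of `D` at the boundary point `p`: `v` is a unit
vector and `p` lies on the supporting hyperplane `H_v = {x | ⟪x,v⟫ = sup_{y ∈ D} ⟪y,v⟫}`. -/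
def IsSupportVec {n : ℕ} (D : Set (EuclideanSpace ℝ (Fin n)))
    (v p : EuclideanSpace ℝ (Fin n)) : Prop :=
  ‖v‖ = 1 ∧ ⟪p, v⟫ = sSup ((fun y : EuclideanSpace ℝ (Fin n) => ⟪y, v⟫) '' D)

open Filter Topology

section InnerProductSpace

variable {E : Type*} [NormedAddCommGroup E] [InnerProductSpace ℝ E]

lemma bddAbove_image_inner_left {D : Set E} (hD : Bornology.IsBounded D) (v : E) :
    BddAbove ((fun y => ⟪y, v⟫) '' D) := by
  rw [show (fun y => ⟪y, v⟫) = innerSL ℝ v from funext fun y => real_inner_comm v y]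
  exact ((innerSL ℝ v).lipschitz.isBounded_image hD).bddAbove

lemma inner_lt_sSup_image_of_isOpen {D : Set E} (hOpen : IsOpen D) (hBdd : Bornology.IsBounded D)
    {v x : E} (hv : v ≠ 0) (hx : x ∈ D) : ⟪x, v⟫ < sSup ((fun y => ⟪y, v⟫) '' D) := by
  have hnear : ∀ᶠ t : ℝ in 𝓝 0, x + t • v ∈ D :=
    (Continuous.tendsto' (by fun_prop) 0 x (by simp)).eventually (hOpen.mem_nhds hx)
  obtain ⟨t, ht, ht0⟩ :=
    ((hnear.filter_mono nhdsWithin_le_nhds).and (self_mem_nhdsWithin (s := Set.Ioi 0))).exists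
  calc ⟪x, v⟫ < ⟪x + t • v, v⟫ := by
        rw [inner_add_left, real_inner_smul_left, real_inner_self_eq_norm_sq]
        have := mul_pos (Set.mem_Ioi.1 ht0) (pow_pos (norm_pos_iff.2 hv) 2)
        linarith
    _ ≤ _ := le_csSup (bddAbove_image_inner_left hBdd v) ⟨_, ht, rfl⟩

/-- If `⟪P, v⟫ - r < ⟪x, v⟫` and `⟪x, w⟫ < ⟪P, w⟫` on `D`, the chord of direction `u` through
`P - (s * r) • v` has length at most `r` times the left-hand side of the last inequality; `u` is
`v` tilted slightly towards `w`. -/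
lemma exists_unit_tilt_of_inner_lt_one {v w : E} (hv : ‖v‖ = 1) (hw : ‖w‖ = 1)
    (hc0 : 0 < ⟪v, w⟫) (hc1 : ⟪v, w⟫ < 1) {s : ℝ} (hs0 : 0 < s) (hs1 : s < 1) :
    ∃ u : E, ‖u‖ = 1 ∧ 0 < ⟪u, v⟫ ∧ 0 < ⟪u, w⟫ ∧
      (1 - s) / ⟪u, v⟫ + s * ⟪v, w⟫ / ⟪u, w⟫ < 1 := by
  set c := ⟪v, w⟫
  set m := 1 - c ^ 2 with hm
  set ε := s / 4 with hε
  set y := v + ε • (w - c • v) with hy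
  have hvv : ⟪v, v⟫ = 1 := by rw [real_inner_self_eq_norm_sq, hv, one_pow]
  have hww : ⟪w, w⟫ = 1 := by rw [real_inner_self_eq_norm_sq, hw, one_pow]
  have hyv : ⟪y, v⟫ = 1 := by
    simp only [hy, inner_add_left, inner_sub_left, real_inner_smul_left, hvv, real_inner_comm v w]
    ring
  have hyw : ⟪y, w⟫ = c + ε * m := by
    simp only [hy, inner_add_left, inner_sub_left, real_inner_smul_left, hww, hm]
    ring
  have hyy : ‖y‖ ^ 2 = 1 + ε ^ 2 * m := by
    rw [← real_inner_self_eq_norm_sq]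
    simp only [hy, inner_add_left, inner_add_right, inner_sub_left, inner_sub_right,
      real_inner_smul_left, real_inner_smul_right, hvv, hww, real_inner_comm v w, hm]
    ring
  have hy0 : y ≠ 0 := by rintro h; simp [h] at hyv
  have hN : 0 < ‖y‖ := norm_pos_iff.2 hy0
  have hm0 : 0 < m := by nlinarith
  have hNle : ‖y‖ ≤ 1 + ε ^ 2 * m := by nlinarith [sq_nonneg (ε ^ 2 * m)]
  have hd : 0 < c + ε * m := by positivity
  refine ⟨‖y‖⁻¹ • y, norm_smul_inv_norm hy0, ?_, ?_, ?_⟩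
  · rw [real_inner_smul_left, hyv]; positivity
  · rw [real_inner_smul_left, hyw]; positivity
  · rw [real_inner_smul_left, real_inner_smul_left, hyv, hyw, div_add_div _ _ (by positivity)
      (by positivity), div_lt_one (by positivity)]
    field_simp
    have hsmall : ε * (c + ε * m * (1 - s)) < s := by nlinarith
    nlinarith [mul_le_mul_of_nonneg_right hNle (by positivity : (0:ℝ) ≤ c + ε * m * (1 - s)),
      mul_lt_mul_of_pos_left hsmall (by positivity : 0 < ε * m)]

lemma eq_norm_smul_of_inner_eq_norm {z v : E} (hv : ‖v‖ = 1) (h : ⟪z, v⟫ = ‖z‖) : z = ‖z‖ • v := by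
  simpa [hv] using inner_eq_norm_mul_iff_real.1 (h.trans (by rw [hv, mul_one]))

end InnerProductSpace

section Chords

variable {n : ℕ} {D : Set (EuclideanSpace ℝ (Fin n))}

lemma segLen_le_of_forall_mem_Ioo {p u : EuclideanSpace ℝ (Fin n)} {a b : ℝ} (hab : a ≤ b)
    (h : ∀ t : ℝ, p + t • u ∈ D → t ∈ Set.Ioo a b) : segLen D p u ≤ b - a := by
  have hsub : connectedComponentIn {t : ℝ | p + t • u ∈ D} 0 ⊆ Set.Ioo a b :=
    (connectedComponentIn_subset _ _).trans h
  have hvol := measure_mono (μ := volume) hsub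
  rw [Real.volume_Ioo] at hvol
  exact ENNReal.toReal_le_of_le_ofReal (sub_nonneg.2 hab) hvol

lemma segLen_le_of_forall_mem {p u v w : EuclideanSpace ℝ (Fin n)} {a b : ℝ} (hp : p ∈ D)
    (hD : ∀ x ∈ D, a < ⟪x, v⟫ ∧ ⟪x, w⟫ < b) (huv : 0 < ⟪u, v⟫) (huw : 0 < ⟪u, w⟫) :
    segLen D p u ≤ (⟪p, v⟫ - a) / ⟪u, v⟫ + (b - ⟪p, w⟫) / ⟪u, w⟫ := by
  obtain ⟨hpa, hpb⟩ := hD p hp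
  have hlo : 0 < (⟪p, v⟫ - a) / ⟪u, v⟫ := div_pos (sub_pos.2 hpa) huv
  have hhi : 0 < (b - ⟪p, w⟫) / ⟪u, w⟫ := div_pos (sub_pos.2 hpb) huw
  refine (segLen_le_of_forall_mem_Ioo (a := -((⟪p, v⟫ - a) / ⟪u, v⟫))
    (b := (b - ⟪p, w⟫) / ⟪u, w⟫) (by linarith) fun t ht => ?_).trans_eq (by ring)
  obtain ⟨h1, h2⟩ := hD _ ht
  rw [inner_add_left, real_inner_smul_left] at h1 h2
  constructor
  · rw [neg_lt, lt_div_iff₀ huv]; linarith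
  · rw [lt_div_iff₀ huw]; linarith

lemma inacc_le_segLen (p : EuclideanSpace ℝ (Fin n)) {u : EuclideanSpace ℝ (Fin n)}
    (hu : ‖u‖ = 1) : inacc D p ≤ segLen D p u :=
  csInf_le ⟨0, by rintro x ⟨u, -, rfl⟩; exact ENNReal.toReal_nonneg⟩ ⟨u, by simpa using hu, rfl⟩

lemma inacc_le_of_forall_mem_slab {p v : EuclideanSpace ℝ (Fin n)} {a b : ℝ} (hp : p ∈ D)
    (hv : ‖v‖ = 1) (hD : ∀ x ∈ D, a < ⟪x, v⟫ ∧ ⟪x, v⟫ < b) : inacc D p ≤ b - a := by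
  have hvv : ⟪v, v⟫ = 1 := by rw [real_inner_self_eq_norm_sq, hv, one_pow]
  have h := segLen_le_of_forall_mem hp hD (hvv ▸ one_pos) (hvv ▸ one_pos)
  rw [hvv, div_one, div_one, sub_add_sub_cancel'] at h
  exact (inacc_le_segLen p hv).trans h

lemma eq_of_forall_inner_lt_of_le_inacc {P v w : EuclideanSpace ℝ (Fin n)} {r s : ℝ}
    (hv : ‖v‖ = 1) (hw : ‖w‖ = 1) (hs0 : 0 < s) (hs1 : s < 1)
    (hDv : ∀ x ∈ D, ⟪P, v⟫ - r < ⟪x, v⟫) (hDw : ∀ x ∈ D, ⟪x, w⟫ < ⟪P, w⟫)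
    (hp : P - (s * r) • v ∈ D) (hr : r ≤ inacc D (P - (s * r) • v)) : w = v := by
  set p := P - (s * r) • v
  set c := ⟪v, w⟫
  have hpv : ⟪p, v⟫ = ⟪P, v⟫ - s * r := by
    rw [inner_sub_left, real_inner_smul_left, real_inner_self_eq_norm_sq, hv]; ring
  have hpw : ⟪p, w⟫ = ⟪P, w⟫ - s * r * c := by
    rw [inner_sub_left, real_inner_smul_left]
  have hr0 : 0 < r := by nlinarith [hDv p hp]
  have hc0 : 0 < c := by
    have := hDw p hp
    rw [hpw] at this
    exact pos_of_mul_pos_right (by linarith : 0 < s * r * c) (by positivity)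
  rcases ((real_inner_le_norm v w).trans_eq (by rw [hv, hw, one_mul])).lt_or_eq with hc1 | hc1
  · obtain ⟨u, hu, huv, huw, hshort⟩ := exists_unit_tilt_of_inner_lt_one hv hw hc0 hc1 hs0 hs1
    have hchord := hr.trans <| (inacc_le_segLen p hu).trans <|
      segLen_le_of_forall_mem (a := ⟪P, v⟫ - r) hp (fun x hx => ⟨hDv x hx, hDw x hx⟩) huv huw
    rw [hpv, hpw] at hchord
    have hwedge : (⟪P, v⟫ - s * r - (⟪P, v⟫ - r)) / ⟪u, v⟫
        + (⟪P, w⟫ - (⟪P, w⟫ - s * r * c)) / ⟪u, w⟫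
        = r * ((1 - s) / ⟪u, v⟫ + s * c / ⟪u, w⟫) := by ring
    linarith [mul_lt_of_lt_one_right hr0 hshort]
  · exact ((inner_eq_one_iff_of_norm_eq_one hv hw).1 hc1).symm

end Chords

namespace IsSupportVec

variable {n : ℕ} {D : Set (EuclideanSpace ℝ (Fin n))} {v P : EuclideanSpace ℝ (Fin n)}

lemma inner_lt (hOpen : IsOpen D) (hBdd : Bornology.IsBounded D) (h : IsSupportVec D v P)
    {x : EuclideanSpace ℝ (Fin n)} (hx : x ∈ D) : ⟪x, v⟫ < ⟪P, v⟫ :=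
  h.2 ▸ inner_lt_sSup_image_of_isOpen hOpen hBdd (norm_ne_zero_iff.1 (h.1 ▸ one_ne_zero)) hx

lemma notMem (hOpen : IsOpen D) (hBdd : Bornology.IsBounded D) (h : IsSupportVec D v P) :
    P ∉ D :=
  fun hP => (h.inner_lt hOpen hBdd hP).false

lemma eq_neg_of_mem_segment (hOpen : IsOpen D) (hBdd : Bornology.IsBounded D)
    {Q w p : EuclideanSpace ℝ (Fin n)} (hP : IsSupportVec D v P) (hQ : IsSupportVec D w Q)
    (hpar : v = w ∨ v = -w) (hseg : p ∈ segment ℝ P Q) (hp : p ∈ D) : v = -w := by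
  refine hpar.resolve_left ?_
  rintro rfl
  obtain ⟨a, b, -, -, hab, rfl⟩ := hseg
  have hlt := hP.inner_lt hOpen hBdd hp
  rw [inner_add_left, real_inner_smul_left, real_inner_smul_left, hQ.2.trans hP.2.symm,
    ← add_mul, hab, one_mul] at hlt
  exact hlt.false

end IsSupportVec

theorem parallel_support_case_general {n : ℕ} (D : Set (EuclideanSpace ℝ (Fin n)))
    (hOpen : IsOpen D) (hBdd : Bornology.IsBounded D)
    (p : EuclideanSpace ℝ (Fin n)) (hp : p ∈ D)
    (P Q : EuclideanSpace ℝ (Fin n))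
    (hlen : dist P Q = inacc D p) (hseg : p ∈ segment ℝ P Q)
    (vP vQ : EuclideanSpace ℝ (Fin n))
    (hvP : IsSupportVec D vP P) (hvQ : IsSupportVec D vQ Q)
    (hpar : vP = vQ ∨ vP = -vQ) :
    vP = -vQ ∧
    (∃ t : ℝ, Q - P = t • vP) ∧
    (∀ w, IsSupportVec D w P → w = vP) ∧
    (∀ w, IsSupportVec D w Q → w = vQ) ∧
    (∀ x ∈ D, inacc D x ≤ inacc D p) := by
  have hvPQ := hvP.eq_neg_of_mem_segment hOpen hBdd hvQ hpar hseg hp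
  have hvQP : vQ = -vP := by rw [hvPQ, neg_neg]
  have hslab : ∀ x ∈ D, ⟪Q, vP⟫ < ⟪x, vP⟫ ∧ ⟪x, vP⟫ < ⟪P, vP⟫ := fun x hx =>
    ⟨by simpa [hvQP] using hvQ.inner_lt hOpen hBdd hx, hvP.inner_lt hOpen hBdd hx⟩
  have hwidth : ∀ x ∈ D, inacc D x ≤ ⟪P - Q, vP⟫ := fun x hx => by
    rw [inner_sub_left]; exact inacc_le_of_forall_mem_slab hx hvP.1 hslab
  have hCS : ⟪P - Q, vP⟫ ≤ dist P Q := by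
    simpa [hvP.1, dist_eq_norm] using real_inner_le_norm (P - Q) vP
  have hW : ⟪P - Q, vP⟫ = dist P Q := le_antisymm hCS (hlen ▸ hwidth p hp)
  have hPQ : P - Q = dist P Q • vP :=
    dist_eq_norm P Q ▸ eq_norm_smul_of_inner_eq_norm hvP.1 (hW.trans (dist_eq_norm P Q))
  obtain ⟨a, b, ha, hb, hab, rfl⟩ := mem_openSegment_of_ne_left_right
    (by rintro rfl; exact hvP.notMem hOpen hBdd hp)
    (by rintro rfl; exact hvQ.notMem hOpen hBdd hp) hseg
  have hpP : a • P + b • Q = P - (b * dist P Q) • vP := by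
    rw [mul_smul, ← hPQ, eq_sub_of_add_eq hab]; module
  have hpQ : a • P + b • Q = Q - (a * dist P Q) • vQ := by
    rw [hvQP, mul_smul, smul_neg, smul_neg, sub_neg_eq_add, ← hPQ, eq_sub_of_add_eq hab]; module
  rw [inner_sub_left] at hW
  refine ⟨hvPQ, ⟨-dist P Q, by rw [neg_smul, ← hPQ, neg_sub]⟩, fun w hw => ?_, fun w hw => ?_,
    fun x hx => hlen ▸ (hwidth x hx).trans hCS⟩
  · refine eq_of_forall_inner_lt_of_le_inacc hvP.1 hw.1 hb (by linarith)
      (fun x hx => ?_) (fun x hx => hw.inner_lt hOpen hBdd hx) (hpP ▸ hp) (hpP ▸ hlen.le)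
    linarith [(hslab x hx).1]
  · refine eq_of_forall_inner_lt_of_le_inacc hvQ.1 hw.1 ha (by linarith)
      (fun x hx => ?_) (fun x hx => hw.inner_lt hOpen hBdd hx) (hpQ ▸ hp) (hpQ ▸ hlen.le)
    rw [hvQP, inner_neg_right, inner_neg_right]
    linarith [(hslab x hx).2]

/-- Let `D ⊂ ℝⁿ` be a bounded convex domain, `p ∈ D`, `r = r(p)`, and
`[P,Q]` a segment of length `r` with `P, Q ∈ ∂D` and `p ∈ [P,Q]`. Let `v_P, v_Q` be
supporting unit vectors at `P, Q`. If `v_P ∥ v_Q`, then `v_P = -v_Q`, `Q - P ∥ v_P`,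
`P` and `Q` are non-corner points, and `r = R`, i.e. `r(x) ≤ r` for all `x ∈ D`. -/
theorem parallel_support_case {n : ℕ} (D : Set (EuclideanSpace ℝ (Fin n)))
    (hOpen : IsOpen D) (hNe : D.Nonempty) (hBdd : Bornology.IsBounded D)
    (hConv : Convex ℝ D)
    (p : EuclideanSpace ℝ (Fin n)) (hp : p ∈ D)
    (P Q : EuclideanSpace ℝ (Fin n)) (hP : P ∈ frontier D) (hQ : Q ∈ frontier D)
    (hlen : dist P Q = inacc D p) (hseg : p ∈ segment ℝ P Q)
    (vP vQ : EuclideanSpace ℝ (Fin n))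
    (hvP : IsSupportVec D vP P) (hvQ : IsSupportVec D vQ Q)
    (hpar : vP = vQ ∨ vP = -vQ) :
    vP = -vQ ∧
    (∃ t : ℝ, Q - P = t • vP) ∧
    (∀ w, IsSupportVec D w P → w = vP) ∧
    (∀ w, IsSupportVec D w Q → w = vQ) ∧
    (∀ x ∈ D, inacc D x ≤ inacc D p) :=
  parallel_support_case_general D hOpen hBdd p hp P Q hlen hseg vP vQ hvP hvQ hpar
end

section
/- Let D ⊂ ℝⁿ be a bounded convex domain. Then the inaccessibility function r attains its supremum R at some point of D; moreover I_D = E_R, and I_D ∩ D = E_R ∩ D = {p ∈ D : r(p) = R}. -/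
open scoped RealInnerProductSpace
open Metric MeasureTheory

/-- `E_r`: the closure of the set of points of `D` with inaccessibility at least `r`. -/
noncomputable def Eset {n : ℕ} (D : Set (EuclideanSpace ℝ (Fin n))) (r : ℝ) :
    Set (EuclideanSpace ℝ (Fin n)) :=
  closure {p | p ∈ D ∧ r ≤ inacc D p}

/-- The inaccessibility `R` of `D`: the supremum of the inaccessibility function. -/
noncomputable def Rmax {n : ℕ} (D : Set (EuclideanSpace ℝ (Fin n))) : ℝ :=
  sSup (inacc D '' D)

/-- `I_D = ⋂_{r < R} E_r`, the set of points of maximum inaccessibility. -/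
noncomputable def maxInaccSet {n : ℕ} (D : Set (EuclideanSpace ℝ (Fin n))) :
    Set (EuclideanSpace ℝ (Fin n)) :=
  ⋂ r ∈ Set.Iio (Rmax D), Eset D r

/-!
For a convex domain every line section is an open interval, and the length of the section in
a fixed direction is a concave function of the base point (Minkowski sums of sections lie in
sections). So `inacc`, an infimum of such lengths, is concave, hence continuous on `D`, and a
point of `I_D` lying in `D` has inaccessibility `R`. The sets `E_r`, `r < R`, are nonempty,
compact and decreasing, so `I_D` is nonempty.

For a point `p ∈ I_D` outside `D`, take a supporting half-space `{x | ⟪x - p, u⟫ < 0}` of `D`.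
Points `q ∈ D` near `p` with inaccessibility close to `R` have long chords in every direction,
and the supporting hyperplane cuts each chord off just beyond `q`; so the chord reaches back
almost a distance `R`, and the open half-ball of radius `R` at `p` on the side of `D` lies in
`D`. By the triangle inequality every chord through `p - t • u`, `0 < t ≤ R / 2`, of that
half-ball has length at least `R`; these points have inaccessibility `R` and tend to `p`.
-/

open Set Filter Topology Bornology
open scoped Pointwise

section Chord

variable {E : Type*} [NormedAddCommGroup E] [NormedSpace ℝ E] {D : Set E} {p q v : E}

def chord (D : Set E) (p v : E) : Set ℝ := {t | p + t • v ∈ D}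

theorem zero_mem_chord (hp : p ∈ D) (v : E) : (0 : ℝ) ∈ chord D p v := by
  simpa [chord] using hp

theorem convex_chord (hD : Convex ℝ D) (p v : E) : Convex ℝ (chord D p v) :=
  (hD.translate_preimage_right p).linear_preimage (LinearMap.toSpanSingleton ℝ E v)

theorem isConnected_chord (hD : Convex ℝ D) (hp : p ∈ D) (v : E) : IsConnected (chord D p v) :=
  ⟨⟨0, zero_mem_chord hp v⟩, Real.convex_iff_isPreconnected.1 (convex_chord hD p v)⟩

theorem Ioo_subset_chord_of_ball_subset {ε : ℝ} (hv : ‖v‖ = 1) (h : ball p ε ⊆ D) :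
    Ioo (-ε) ε ⊆ chord D p v := fun s hs =>
  h <| by
    rwa [mem_ball, dist_eq_norm, add_sub_cancel_left, norm_smul, hv, mul_one, Real.norm_eq_abs,
      abs_lt]

theorem dist_le_diam_of_mem_chord (hD : IsBounded D) (hv : ‖v‖ = 1) {s t : ℝ}
    (hs : s ∈ chord D p v) (ht : t ∈ chord D p v) : dist s t ≤ diam D := by
  have h := dist_le_diam_of_mem hD hs ht
  rwa [dist_add_left, dist_eq_norm, ← sub_smul, norm_smul, hv, mul_one, ← dist_eq_norm] at h

theorem isBounded_chord (hD : IsBounded D) (hv : ‖v‖ = 1) : IsBounded (chord D p v) :=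
  Metric.isBounded_iff.2 ⟨diam D, fun _ hs _ ht => dist_le_diam_of_mem_chord hD hv hs ht⟩

theorem diam_chord_le (hD : IsBounded D) (hv : ‖v‖ = 1) : diam (chord D p v) ≤ diam D :=
  diam_le_of_forall_dist_le diam_nonneg fun _ hs _ ht => dist_le_diam_of_mem_chord hD hv hs ht

theorem Convex.smul_chord_add_smul_chord_subset (hD : Convex ℝ D) {a b : ℝ} (ha : 0 ≤ a)
    (hb : 0 ≤ b) (hab : a + b = 1) (v : E) :
    a • chord D p v + b • chord D q v ⊆ chord D (a • p + b • q) v := by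
  rintro _ ⟨_, ⟨s, hs, rfl⟩, _, ⟨t, ht, rfl⟩, rfl⟩
  show a • p + b • q + (a • s + b • t) • v ∈ D
  convert hD hs ht ha hb hab using 1
  module

end Chord

section HalfBall

variable {E : Type*} [NormedAddCommGroup E] [InnerProductSpace ℝ E] {D : Set E} {p q u v : E}

def halfBall (p u : E) (R : ℝ) : Set E := ball p R ∩ {x | ⟪x - p, u⟫ < 0}

theorem isOpen_halfBall (p u : E) (R : ℝ) : IsOpen (halfBall p u R) :=
  isOpen_ball.inter (isOpen_lt (by fun_prop) continuous_const)

theorem exists_unit_inner_neg [CompleteSpace E] (hD : Convex ℝ D) (hDo : IsOpen D)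
    (hne : D.Nonempty) (hp : p ∉ D) : ∃ u : E, ‖u‖ = 1 ∧ ∀ x ∈ D, ⟪x - p, u⟫ < 0 := by
  obtain ⟨f, hf⟩ := geometric_hahn_banach_open_point hD hDo hp
  set w := (InnerProductSpace.toDual ℝ E).symm f
  have hw : ∀ x, ⟪x - p, w⟫ = f x - f p := fun x => by
    rw [real_inner_comm, InnerProductSpace.toDual_symm_apply, map_sub]
  have hw0 : w ≠ 0 := by
    obtain ⟨y, hy⟩ := hne
    rintro h
    have := hw y
    rw [h, inner_zero_right] at this
    linarith [hf y hy]
  refine ⟨‖w‖⁻¹ • w, by simp [norm_smul, hw0], fun x hx => ?_⟩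
  rw [real_inner_smul_right, hw]
  exact mul_neg_of_pos_of_neg (by positivity) (sub_neg.2 (hf x hx))

theorem mul_inner_lt_of_mem_chord (hsupp : ∀ y ∈ D, ⟪y - p, u⟫ < 0) {τ : ℝ}
    (hτ : τ ∈ chord D q v) : τ * ⟪v, u⟫ < ⟪p - q, u⟫ := by
  have h := hsupp _ hτ
  rw [show q + τ • v - p = τ • v - (p - q) by abel, inner_sub_left, real_inner_smul_left] at h
  linarith

theorem sub_smul_add_smul_mem_halfBall (hu : ‖u‖ = 1) (hv : ‖v‖ = 1) {R t s : ℝ} (ht : 0 ≤ t)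
    (hR : |s| + t < R) (hst : s * ⟪v, u⟫ < t) : p - t • u + s • v ∈ halfBall p u R := by
  have hx : p - t • u + s • v - p = s • v - t • u := by abel
  refine ⟨?_, ?_⟩
  · rw [mem_ball, dist_eq_norm, hx]
    calc ‖s • v - t • u‖ ≤ ‖s • v‖ + ‖t • u‖ := norm_sub_le _ _
      _ = |s| + t := by rw [norm_smul, norm_smul, hu, hv, Real.norm_eq_abs, Real.norm_of_nonneg ht,
          mul_one, mul_one]
      _ < R := hR
  · show ⟪p - t • u + s • v - p, u⟫ < 0
    rw [hx, inner_sub_left, real_inner_smul_left, real_inner_smul_left, real_inner_self_eq_norm_sq,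
      hu]
    linarith

theorem sub_smul_mem_halfBall (hu : ‖u‖ = 1) {R t : ℝ} (ht : 0 < t) (htR : t < R) :
    p - t • u ∈ halfBall p u R := by
  simpa using sub_smul_add_smul_mem_halfBall (p := p) (s := 0) hu hu ht.le (by simpa using htR)
    (by simpa using ht)

theorem Ioo_subset_chord_of_halfBall_subset {R : ℝ} (hH : halfBall p u R ⊆ D) (hu : ‖u‖ = 1)
    (hv : ‖v‖ = 1) (hvu : 0 ≤ ⟪v, u⟫) {t : ℝ} (ht : 0 < t) (htR : 2 * t ≤ R) :
    Ioo (t - R) t ⊆ chord D (p - t • u) v := by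
  rintro s ⟨hs₁, hs₂⟩
  have hvu₁ : ⟪v, u⟫ ≤ 1 := by
    simpa [hu, hv] using real_inner_le_norm v u
  apply hH
  apply sub_smul_add_smul_mem_halfBall hu hv ht.le
  · rcases abs_cases s with ⟨h, _⟩ | ⟨h, _⟩ <;> linarith
  · rcases le_total s 0 with h | h <;> nlinarith

end HalfBall

section Euclidean

variable {n : ℕ} {D : Set (EuclideanSpace ℝ (Fin n))} {p q u v : EuclideanSpace ℝ (Fin n)}

theorem segLen_eq_diam_chord (hD : Convex ℝ D) (hb : IsBounded D) (hp : p ∈ D)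
    (hv : ‖v‖ = 1) : segLen D p v = diam (chord D p v) := by
  have hB := isBounded_chord (p := p) hb hv
  have hconn := isConnected_chord hD hp v
  have hvol : volume (chord D p v) = ediam (chord D p v) :=
    le_antisymm (Real.volume_le_diam _) <| by
      rw [Real.ediam_eq hB, ← Real.volume_Ioo]
      exact measure_mono (hconn.Ioo_csInf_csSup_subset hB.bddBelow hB.bddAbove)
  show (volume (connectedComponentIn (chord D p v) 0)).toReal = _
  rw [hconn.isPreconnected.connectedComponentIn (zero_mem_chord hp v), hvol]
  rfl

theorem segLen_eq_sSup_sub_sInf (hD : Convex ℝ D) (hb : IsBounded D) (hp : p ∈ D)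
    (hv : ‖v‖ = 1) : segLen D p v = sSup (chord D p v) - sInf (chord D p v) := by
  rw [segLen_eq_diam_chord hD hb hp hv, Real.diam_eq (isBounded_chord hb hv)]

theorem sub_le_segLen_of_Ioo_subset_chord (hD : Convex ℝ D) (hb : IsBounded D) (hp : p ∈ D)
    (hv : ‖v‖ = 1) {s₁ s₂ : ℝ} (h : Ioo s₁ s₂ ⊆ chord D p v) : s₂ - s₁ ≤ segLen D p v := by
  rcases le_total s₂ s₁ with hs | hs
  · exact (sub_nonpos.2 hs).trans ENNReal.toReal_nonneg
  · rw [segLen_eq_diam_chord hD hb hp hv, ← Real.diam_Ioo hs]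
    exact diam_mono h (isBounded_chord hb hv)

theorem segLen_le_diam (hD : Convex ℝ D) (hb : IsBounded D) (hp : p ∈ D) (hv : ‖v‖ = 1) :
    segLen D p v ≤ diam D :=
  segLen_eq_diam_chord hD hb hp hv ▸ diam_chord_le hb hv

theorem concaveOn_segLen (hD : Convex ℝ D) (hb : IsBounded D) (hv : ‖v‖ = 1) :
    ConcaveOn ℝ D (fun p => segLen D p v) := by
  refine ⟨hD, fun p hp q hq a b ha hb' hab => ?_⟩
  have hpq : a • p + b • q ∈ D := hD hp hq ha hb' hab
  have hsub := hD.smul_chord_add_smul_chord_subset (p := p) (q := q) ha hb' hab v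
  have hP := isBounded_chord (p := p) hb hv
  have hQ := isBounded_chord (p := q) hb hv
  have hC := isBounded_chord (p := a • p + b • q) hb hv
  have hnP : (a • chord D p v).Nonempty := ⟨_, smul_mem_smul_set (zero_mem_chord hp v)⟩
  have hnQ : (b • chord D q v).Nonempty := ⟨_, smul_mem_smul_set (zero_mem_chord hq v)⟩
  have hsup :
      a * sSup (chord D p v) + b * sSup (chord D q v) ≤ sSup (chord D (a • p + b • q) v) := by
    rw [← smul_eq_mul, ← smul_eq_mul, ← Real.sSup_smul_of_nonneg ha,
      ← Real.sSup_smul_of_nonneg hb', ← csSup_add hnP (hP.bddAbove.smul_of_nonneg ha) hnQ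
        (hQ.bddAbove.smul_of_nonneg hb')]
    exact csSup_le_csSup hC.bddAbove (hnP.add hnQ) hsub
  have hinf :
      sInf (chord D (a • p + b • q) v) ≤ a * sInf (chord D p v) + b * sInf (chord D q v) := by
    rw [← smul_eq_mul, ← smul_eq_mul, ← Real.sInf_smul_of_nonneg ha,
      ← Real.sInf_smul_of_nonneg hb', ← csInf_add hnP (hP.bddBelow.smul_of_nonneg ha) hnQ
        (hQ.bddBelow.smul_of_nonneg hb')]
    exact csInf_le_csInf hC.bddBelow (hnP.add hnQ) hsub
  simp only [smul_eq_mul]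
  rw [segLen_eq_sSup_sub_sInf hD hb hp hv, segLen_eq_sSup_sub_sInf hD hb hq hv,
    segLen_eq_sSup_sub_sInf hD hb hpq hv]
  linarith

theorem inacc_le_segLen_s8 (hv : ‖v‖ = 1) : inacc D p ≤ segLen D p v :=
  csInf_le ⟨0, by rintro _ ⟨w, -, rfl⟩; exact ENNReal.toReal_nonneg⟩ ⟨v, by simpa using hv, rfl⟩

theorem le_inacc (hn : (sphere (0 : EuclideanSpace ℝ (Fin n)) 1).Nonempty) {c : ℝ}
    (h : ∀ v, ‖v‖ = 1 → c ≤ segLen D p v) : c ≤ inacc D p :=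
  le_csInf (hn.image _) <| by
    rintro _ ⟨v, hv, rfl⟩
    exact h v (by simpa using hv)

theorem inacc_le_diam (hD : Convex ℝ D) (hb : IsBounded D) (hp : p ∈ D) :
    inacc D p ≤ diam D := by
  rcases (sphere (0 : EuclideanSpace ℝ (Fin n)) 1).eq_empty_or_nonempty with h | ⟨v, hv⟩
  · simp [inacc, h, diam_nonneg]
  · have hv : ‖v‖ = 1 := by simpa using hv
    exact (inacc_le_segLen_s8 hv).trans (segLen_le_diam hD hb hp hv)

theorem concaveOn_inacc (hD : Convex ℝ D) (hb : IsBounded D) : ConcaveOn ℝ D (inacc D) := by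
  rcases (sphere (0 : EuclideanSpace ℝ (Fin n)) 1).eq_empty_or_nonempty with h | hn
  · have : inacc D = fun _ => 0 := funext fun p => by simp [inacc, h]
    exact this ▸ concaveOn_const 0 hD
  · refine ⟨hD, fun p hp q hq a b ha hb' hab => le_inacc hn fun v hv => ?_⟩
    calc a • inacc D p + b • inacc D q ≤ a • segLen D p v + b • segLen D q v := by
          gcongr <;> exact inacc_le_segLen_s8 hv
      _ ≤ segLen D (a • p + b • q) v := (concaveOn_segLen hD hb hv).2 hp hq ha hb' hab

theorem inacc_pos (hDo : IsOpen D) (hD : Convex ℝ D) (hb : IsBounded D) (hp : p ∈ D)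
    (hn : (sphere (0 : EuclideanSpace ℝ (Fin n)) 1).Nonempty) : 0 < inacc D p := by
  obtain ⟨ε, hε, hball⟩ := Metric.isOpen_iff.1 hDo p hp
  have h : 2 * ε ≤ inacc D p := le_inacc hn fun v hv => by
    have := sub_le_segLen_of_Ioo_subset_chord hD hb hp hv
      (Ioo_subset_chord_of_ball_subset hv hball)
    linarith
  linarith

theorem inacc_le_Rmax (hD : Convex ℝ D) (hb : IsBounded D) (hp : p ∈ D) :
    inacc D p ≤ Rmax D :=
  le_csSup ⟨diam D, by rintro _ ⟨q, hq, rfl⟩; exact inacc_le_diam hD hb hq⟩ (mem_image_of_mem _ hp)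

theorem exists_lt_inacc (hne : D.Nonempty) {r : ℝ} (hr : r < Rmax D) :
    ∃ p ∈ D, r < inacc D p := by
  obtain ⟨_, ⟨p, hp, rfl⟩, h⟩ := exists_lt_of_lt_csSup (hne.image _) hr
  exact ⟨p, hp, h⟩

theorem Rmax_pos (hDo : IsOpen D) (hD : Convex ℝ D) (hb : IsBounded D) (hne : D.Nonempty)
    (hn : (sphere (0 : EuclideanSpace ℝ (Fin n)) 1).Nonempty) : 0 < Rmax D :=
  let ⟨_, hp⟩ := hne
  (inacc_pos hDo hD hb hp hn).trans_le (inacc_le_Rmax hD hb hp)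

theorem Eset_anti : Antitone (Eset D) :=
  fun _ _ h => closure_mono fun _ hq => ⟨hq.1, h.trans hq.2⟩

theorem isCompact_Eset (hb : IsBounded D) (r : ℝ) : IsCompact (Eset D r) :=
  (hb.subset fun _ hq => hq.1).isCompact_closure

theorem Eset_nonempty (hne : D.Nonempty) {r : ℝ} (hr : r < Rmax D) : (Eset D r).Nonempty :=
  let ⟨p, hp, h⟩ := exists_lt_inacc hne hr
  ⟨p, subset_closure ⟨hp, h.le⟩⟩

theorem maxInaccSet_nonempty (hne : D.Nonempty) (hb : IsBounded D) :
    (maxInaccSet D).Nonempty := by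
  have : Nonempty (Iio (Rmax D)) := ⟨⟨Rmax D - 1, sub_one_lt (Rmax D)⟩⟩
  rw [maxInaccSet, biInter_eq_iInter]
  exact IsCompact.nonempty_iInter_of_directed_nonempty_isCompact_isClosed _
    (Eset_anti.comp_monotone (Subtype.mono_coe _)).directed_ge (fun r => Eset_nonempty hne r.2)
    (fun r => isCompact_Eset hb r) (fun _ => isClosed_closure)

theorem le_inacc_of_mem_Eset (hDo : IsOpen D) (hD : Convex ℝ D) (hb : IsBounded D) (hp : p ∈ D)
    {r : ℝ} (h : p ∈ Eset D r) : r ≤ inacc D p :=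
  have hcont : ContinuousAt (inacc D) p :=
    ((concaveOn_inacc hD hb).continuousOn hDo).continuousAt (hDo.mem_nhds hp)
  isClosed_Ici.mem_of_frequently_of_tendsto
    ((mem_closure_iff_frequently.1 h).mono fun _ hq => hq.2) hcont.tendsto

theorem sub_smul_mem_of_inner_lt (hD : Convex ℝ D) (hb : IsBounded D)
    (hsupp : ∀ y ∈ D, ⟪y - p, u⟫ < 0) (hq : q ∈ D) (hv : ‖v‖ = 1) (hvu : 0 < ⟪v, u⟫) {s : ℝ}
    (hs : 0 < s) (hlt : ⟪p - q, u⟫ < (segLen D q v - s) * ⟪v, u⟫) : q - s • v ∈ D := by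
  have hB := isBounded_chord (p := q) hb hv
  have hsup : sSup (chord D q v) < segLen D q v - s :=
    (csSup_le ⟨0, zero_mem_chord hq v⟩ fun τ hτ =>
      (le_div_iff₀ hvu).2 (mul_inner_lt_of_mem_chord hsupp hτ).le).trans_lt
      ((div_lt_iff₀ hvu).2 hlt)
  have hmem : -s ∈ chord D q v := by
    refine (isConnected_chord hD hq v).Ioo_csInf_csSup_subset hB.bddBelow hB.bddAbove ⟨?_, ?_⟩
    · rw [segLen_eq_sSup_sub_sInf hD hb hq hv] at hsup
      linarith
    · linarith [le_csSup hB.bddAbove (zero_mem_chord hq v)]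
  simpa [chord, sub_eq_add_neg] using hmem

theorem halfBall_subset_closure (hD : Convex ℝ D) (hb : IsBounded D)
    (hsupp : ∀ y ∈ D, ⟪y - p, u⟫ < 0) {R : ℝ} (hE : ∀ r < R, p ∈ Eset D r) :
    halfBall p u R ⊆ closure D := by
  rintro x ⟨hxR, hxu⟩
  set s := ‖p - x‖
  have hs : 0 < s := norm_pos_iff.2 <| sub_ne_zero.2 fun h => by simp [h] at hxu
  set v := s⁻¹ • (p - x)
  have hv : ‖v‖ = 1 := by rw [norm_smul, norm_inv, norm_norm, inv_mul_cancel₀ hs.ne']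
  have hxv : x - p = -(s • v) := by simp [v, smul_smul, hs.ne']
  have hvu : 0 < ⟪v, u⟫ := by
    rw [real_inner_smul_left, ← neg_sub, inner_neg_left]
    exact mul_pos (inv_pos.2 hs) (neg_pos.2 hxu)
  have hsR : s < R := by rwa [mem_ball, dist_comm, dist_eq_norm] at hxR
  obtain ⟨r, hsr, hrR⟩ := exists_between hsR
  have hfreq : ∃ᶠ q in 𝓝 p, q ∈ D ∧ r ≤ inacc D q := mem_closure_iff_frequently.1 (hE r hrR)
  have hnear : ∀ᶠ q in 𝓝 p, ⟪p - q, u⟫ < (r - s) * ⟪v, u⟫ := by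
    have : Tendsto (fun q => ⟪p - q, u⟫) (𝓝 p) (𝓝 0) := by
      simpa using (by fun_prop : Continuous fun q => ⟪p - q, u⟫).tendsto p
    exact this.eventually (gt_mem_nhds (mul_pos (sub_pos.2 hsr) hvu))
  have htrans : Tendsto (fun q => q + (x - p)) (𝓝 p) (𝓝 x) := by
    simpa using (by fun_prop : Continuous fun q => q + (x - p)).tendsto p
  refine mem_closure_iff_frequently.2 (htrans.frequently ((hfreq.and_eventually hnear).mono ?_))
  rintro q ⟨⟨hq, hrq⟩, hpq⟩
  rw [hxv, ← sub_eq_add_neg]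
  refine sub_smul_mem_of_inner_lt hD hb hsupp hq hv hvu hs (hpq.trans_le ?_)
  gcongr
  linarith [inacc_le_segLen_s8 (D := D) (p := q) hv]

theorem le_inacc_sub_smul (hD : Convex ℝ D) (hb : IsBounded D) {R : ℝ}
    (hH : halfBall p u R ⊆ D) (hu : ‖u‖ = 1) {t : ℝ} (ht : 0 < t) (htR : 2 * t ≤ R) :
    R ≤ inacc D (p - t • u) := by
  have hz : p - t • u ∈ D := hH (sub_smul_mem_halfBall hu ht (by linarith))
  refine le_inacc ⟨u, by simpa using hu⟩ fun v hv => ?_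
  rcases le_total 0 ⟪v, u⟫ with h | h
  · simpa using sub_le_segLen_of_Ioo_subset_chord hD hb hz hv
      (Ioo_subset_chord_of_halfBall_subset hH hu hv h ht htR)
  · have hneg : Ioo (-t) (R - t) ⊆ chord D (p - t • u) v := fun s hs => by
      have := Ioo_subset_chord_of_halfBall_subset hH hu (v := -v) (by simpa using hv)
        (by simpa [inner_neg_left] using h) ht htR (a := -s)
        ⟨by linarith [hs.2], by linarith [hs.1]⟩
      simpa [chord] using this
    simpa using sub_le_segLen_of_Ioo_subset_chord hD hb hz hv hneg

theorem mem_Eset_Rmax_of_notMem (hDo : IsOpen D) (hne : D.Nonempty) (hD : Convex ℝ D)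
    (hb : IsBounded D) (hp : p ∉ D) (hE : ∀ r < Rmax D, p ∈ Eset D r) : p ∈ Eset D (Rmax D) := by
  obtain ⟨u, hu, hsupp⟩ := exists_unit_inner_neg hD hDo hne hp
  have hR : 0 < Rmax D := Rmax_pos hDo hD hb hne ⟨u, by simpa using hu⟩
  have hH : halfBall p u (Rmax D) ⊆ D := by
    have h := (isOpen_halfBall p u _).subset_interior_iff.2
      (halfBall_subset_closure hD hb hsupp hE)
    rwa [hD.interior_closure_eq_interior_of_nonempty_interior (by rwa [hDo.interior_eq]),
      hDo.interior_eq] at h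
  have hlim : Tendsto (fun t : ℝ => p - t • u) (𝓝[>] 0) (𝓝 p) := by
    simpa using ((by fun_prop : Continuous fun t : ℝ => p - t • u).tendsto 0).mono_left
      nhdsWithin_le_nhds
  refine mem_closure_of_tendsto hlim ?_
  filter_upwards [Ioo_mem_nhdsGT (half_pos hR)] with t ⟨ht, htR⟩
  exact ⟨hH (sub_smul_mem_halfBall hu ht (htR.trans (half_lt_self hR))),
    le_inacc_sub_smul hD hb hH hu ht (by linarith)⟩

theorem mem_Eset_Rmax_of_mem_maxInaccSet (hDo : IsOpen D) (hne : D.Nonempty) (hD : Convex ℝ D)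
    (hb : IsBounded D) (hp : p ∈ maxInaccSet D) : p ∈ Eset D (Rmax D) := by
  have hE : ∀ r < Rmax D, p ∈ Eset D r := fun r hr => mem_iInter₂.1 hp r hr
  by_cases hpD : p ∈ D
  · exact subset_closure ⟨hpD, le_of_forall_lt_imp_le_of_dense fun r hr =>
      le_inacc_of_mem_Eset hDo hD hb hpD (hE r hr)⟩
  · exact mem_Eset_Rmax_of_notMem hDo hne hD hb hpD hE

theorem maxInaccSet_eq_Eset_Rmax (hDo : IsOpen D) (hne : D.Nonempty) (hD : Convex ℝ D)
    (hb : IsBounded D) : maxInaccSet D = Eset D (Rmax D) :=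
  Subset.antisymm (fun _ hp => mem_Eset_Rmax_of_mem_maxInaccSet hDo hne hD hb hp)
    fun _ hp => mem_iInter₂.2 fun _ hr => Eset_anti (le_of_lt hr) hp

theorem Eset_Rmax_inter_eq (hDo : IsOpen D) (hD : Convex ℝ D) (hb : IsBounded D) :
    Eset D (Rmax D) ∩ D = {p | p ∈ D ∧ inacc D p = Rmax D} := by
  ext p
  exact ⟨fun ⟨hE, hp⟩ =>
      ⟨hp, (inacc_le_Rmax hD hb hp).antisymm (le_inacc_of_mem_Eset hDo hD hb hp hE)⟩,
    fun ⟨hp, h⟩ => ⟨subset_closure ⟨hp, h.ge⟩, hp⟩⟩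

end Euclidean

/-- for a bounded convex domain `D ⊂ ℝⁿ`, the inaccessibility function
attains its supremum `R` on `D`; moreover `I_D = E_R` and
`I_D ∩ D = E_R ∩ D = {p ∈ D | r(p) = R}`. -/
theorem sup_attained_and_maxInaccSet_eq {n : ℕ} (D : Set (EuclideanSpace ℝ (Fin n)))
    (hOpen : IsOpen D) (hNe : D.Nonempty) (hBdd : Bornology.IsBounded D)
    (hConv : Convex ℝ D) :
    (∃ p ∈ D, inacc D p = Rmax D) ∧
    maxInaccSet D = Eset D (Rmax D) ∧
    maxInaccSet D ∩ D = {p | p ∈ D ∧ inacc D p = Rmax D} ∧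
    Eset D (Rmax D) ∩ D = {p | p ∈ D ∧ inacc D p = Rmax D} := by
  have hI := maxInaccSet_eq_Eset_Rmax hOpen hNe hConv hBdd
  have hS := Eset_Rmax_inter_eq hOpen hConv hBdd
  obtain ⟨q, hq, hRq⟩ := closure_nonempty_iff.1 (hI ▸ maxInaccSet_nonempty hNe hBdd)
  exact ⟨⟨q, hq, (inacc_le_Rmax hConv hBdd hq).antisymm hRq⟩, hI, by rw [hI, hS], hS⟩
end

section
/- Let D ⊂ ℝⁿ be a bounded convex domain with R = max_{p ∈ D} r(p). For every r ∈ (0, R), the level set {p ∈ D : r(p) = r} has empty interior. -/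
open scoped RealInnerProductSpace
open Metric MeasureTheory

/-!
Each chord length `f_p(v)` is a concave function of `p ∈ D`: the parameter set
`{t | p + t v ∈ D}` is an interval whose length is its diameter, and a convex combination of
the intervals at `p₁` and `p₂` (a Minkowski sum, whose diameter is additive in `ℝ`) lies in the
interval at the combined point. Hence `r`, an infimum of concave functions, is concave. If `r`
were constant near a point `p`, then `p` would be a local, hence global, maximum of the
concave function `r`, so `r(p) = R`.
-/

open Set Filter Topology Metric
open scoped Pointwise

theorem Set.OrdConnected.volume_eq_ediam {s : Set ℝ} (hs : s.OrdConnected)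
    (hb : Bornology.IsBounded s) : volume s = ediam s := by
  refine le_antisymm (Real.volume_le_diam s) ?_
  rcases s.eq_empty_or_nonempty with rfl | hne
  · simp
  rw [Real.ediam_eq hb, ← Real.volume_Ioo]
  exact measure_mono (IsConnected.Ioo_csInf_csSup_subset ⟨hne, hs.isPreconnected⟩
    hb.bddBelow hb.bddAbove)

theorem Real.diam_add {s t : Set ℝ} (hs : Bornology.IsBounded s) (ht : Bornology.IsBounded t)
    (hs' : s.Nonempty) (ht' : t.Nonempty) : diam (s + t) = diam s + diam t := by
  rw [Real.diam_eq (hs.add ht), Real.diam_eq hs, Real.diam_eq ht,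
    csSup_add hs' hs.bddAbove ht' ht.bddAbove, csInf_add hs' hs.bddBelow ht' ht.bddBelow]
  ring

theorem concaveOn_sInf_image {E ι : Type*} [AddCommGroup E] [Module ℝ E] {s : Set E}
    {t : Set ι} {F : ι → E → ℝ} (hs : Convex ℝ s) (hF : ∀ i ∈ t, ConcaveOn ℝ s (F i))
    (hbdd : ∀ x ∈ s, BddBelow ((F · x) '' t)) :
    ConcaveOn ℝ s fun x ↦ sInf ((F · x) '' t) := by
  rcases t.eq_empty_or_nonempty with rfl | ht
  · simpa using concaveOn_const 0 hs
  refine ⟨hs, fun x hx y hy a b ha hb hab ↦ le_csInf (ht.image _) ?_⟩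
  rintro _ ⟨i, hi, rfl⟩
  calc a • sInf ((F · x) '' t) + b • sInf ((F · y) '' t) ≤ a • F i x + b • F i y := by
        gcongr <;> exact csInf_le (hbdd _ ‹_›) (mem_image_of_mem _ hi)
    _ ≤ F i (a • x + b • y) := (hF i hi).2 hx hy ha hb hab

theorem ConcaveOn.interior_setOf_eq_eq_empty {E : Type*} [AddCommGroup E] [TopologicalSpace E]
    [Module ℝ E] [IsTopologicalAddGroup E] [ContinuousSMul ℝ E] {s : Set E} {f : E → ℝ}
    (hf : ConcaveOn ℝ s f) {c : ℝ} (hc : c < sSup (f '' s)) :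
    interior {x | x ∈ s ∧ f x = c} = ∅ := by
  refine eq_empty_of_forall_notMem fun p hp ↦ hc.not_ge ?_
  have hps : p ∈ s := (interior_subset hp).1
  have hpc : f p = c := (interior_subset hp).2
  have hlocal : IsLocalMax f p := by
    filter_upwards [mem_interior_iff_mem_nhds.mp hp] with x hx
    rw [hx.2, hpc]
  have hmax : IsMaxOn f s p := .of_isLocalMaxOn_of_concaveOn hps (hlocal.on s) hf
  refine csSup_le ⟨f p, mem_image_of_mem f hps⟩ (forall_mem_image.2 fun x hx ↦ ?_)
  exact hpc ▸ hmax hx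

section lineSlice

variable {E : Type*} [NormedAddCommGroup E] [NormedSpace ℝ E]

def lineSlice (D : Set E) (p v : E) : Set ℝ := {t | p + t • v ∈ D}

theorem zero_mem_lineSlice {D : Set E} {p : E} (hp : p ∈ D) (v : E) : 0 ∈ lineSlice D p v := by
  simpa [lineSlice] using hp

theorem smul_add_smul_lineSlice_subset {D : Set E} (hD : Convex ℝ D) (p₁ p₂ v : E) {a b : ℝ}
    (ha : 0 ≤ a) (hb : 0 ≤ b) (hab : a + b = 1) :
    a • lineSlice D p₁ v + b • lineSlice D p₂ v ⊆ lineSlice D (a • p₁ + b • p₂) v := by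
  rintro _ ⟨_, ⟨t₁, ht₁, rfl⟩, _, ⟨t₂, ht₂, rfl⟩, rfl⟩
  have hcomb : a • (p₁ + t₁ • v) + b • (p₂ + t₂ • v) =
      a • p₁ + b • p₂ + (a • t₁ + b • t₂) • v := by
    match_scalars <;> ring
  simpa only [lineSlice, mem_ofPred_eq, ← hcomb] using hD ht₁ ht₂ ha hb hab

theorem Convex.lineSlice {D : Set E} (hD : Convex ℝ D) (p v : E) :
    Convex ℝ (lineSlice D p v) := by
  intro t₁ ht₁ t₂ ht₂ a b ha hb hab
  have h := smul_add_smul_lineSlice_subset hD p p v ha hb hab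
    (add_mem_add (smul_mem_smul_set ht₁) (smul_mem_smul_set ht₂))
  rwa [← add_smul, hab, one_smul] at h

theorem Bornology.IsBounded.lineSlice {D : Set E} (hD : Bornology.IsBounded D) (p : E) {v : E}
    (hv : v ≠ 0) : Bornology.IsBounded (lineSlice D p v) := by
  obtain ⟨C, hC⟩ := isBounded_iff_forall_norm_le.mp hD
  refine isBounded_iff_forall_norm_le.mpr ⟨(C + ‖p‖) / ‖v‖, fun t ht ↦ ?_⟩
  rw [le_div_iff₀ (norm_pos_iff.mpr hv), ← norm_smul]
  calc ‖t • v‖ = ‖(p + t • v) - p‖ := by rw [add_sub_cancel_left]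
    _ ≤ ‖p + t • v‖ + ‖p‖ := norm_sub_le _ _
    _ ≤ C + ‖p‖ := by gcongr; exact hC _ ht

end lineSlice

section segLen

variable {n : ℕ} {D : Set (EuclideanSpace ℝ (Fin n))}

theorem segLen_nonneg (p v : EuclideanSpace ℝ (Fin n)) :
    0 ≤ segLen D p v :=
  ENNReal.toReal_nonneg

theorem segLen_eq_diam (hConv : Convex ℝ D) (hBdd : Bornology.IsBounded D)
    {p : EuclideanSpace ℝ (Fin n)} (hp : p ∈ D) {v : EuclideanSpace ℝ (Fin n)} (hv : v ≠ 0) :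
    segLen D p v = diam (lineSlice D p v) := by
  have hcc : connectedComponentIn (lineSlice D p v) 0 = lineSlice D p v :=
    (hConv.lineSlice p v).isPreconnected.connectedComponentIn (zero_mem_lineSlice hp v)
  rw [segLen, ← lineSlice, hcc,
    (hConv.lineSlice p v).ordConnected.volume_eq_ediam (hBdd.lineSlice p hv), diam]

theorem concaveOn_segLen_s12 (hConv : Convex ℝ D) (hBdd : Bornology.IsBounded D)
    {v : EuclideanSpace ℝ (Fin n)} (hv : v ≠ 0) : ConcaveOn ℝ D fun p ↦ segLen D p v := by
  refine ⟨hConv, fun p₁ h₁ p₂ h₂ a b ha hb hab ↦ ?_⟩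
  have hbdd (p) : Bornology.IsBounded (lineSlice D p v) := hBdd.lineSlice p hv
  have hne {p} (hp : p ∈ D) : (lineSlice D p v).Nonempty := ⟨0, zero_mem_lineSlice hp v⟩
  simp only [segLen_eq_diam hConv hBdd h₁ hv, segLen_eq_diam hConv hBdd h₂ hv,
    segLen_eq_diam hConv hBdd (hConv h₁ h₂ ha hb hab) hv, smul_eq_mul]
  calc a * diam (lineSlice D p₁ v) + b * diam (lineSlice D p₂ v)
      = diam (a • lineSlice D p₁ v + b • lineSlice D p₂ v) := by
        rw [Real.diam_add ((hbdd p₁).smul₀ a) ((hbdd p₂).smul₀ b) ((hne h₁).smul_set)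
          ((hne h₂).smul_set), diam_smul₀, diam_smul₀, Real.norm_of_nonneg ha,
          Real.norm_of_nonneg hb]
    _ ≤ diam (lineSlice D (a • p₁ + b • p₂) v) :=
        diam_mono (smul_add_smul_lineSlice_subset hConv p₁ p₂ v ha hb hab) (hbdd _)

theorem concaveOn_inacc_s12 (hConv : Convex ℝ D) (hBdd : Bornology.IsBounded D) :
    ConcaveOn ℝ D (inacc D) :=
  concaveOn_sInf_image hConv
    (fun _ hv ↦ concaveOn_segLen_s12 hConv hBdd (ne_zero_of_mem_sphere one_ne_zero ⟨_, hv⟩))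
    (fun p _ ↦ ⟨0, forall_mem_image.2 fun v _ ↦ segLen_nonneg p v⟩)

end segLen

theorem level_set_empty_interior_general {n : ℕ} (D : Set (EuclideanSpace ℝ (Fin n)))
    (hBdd : Bornology.IsBounded D) (hConv : Convex ℝ D) :
    ∀ r ∈ Set.Ioo (0 : ℝ) (Rmax D),
      interior {p | p ∈ D ∧ inacc D p = r} = ∅ :=
  fun _ hr ↦ (concaveOn_inacc_s12 hConv hBdd).interior_setOf_eq_eq_empty hr.2

/-- for a bounded convex domain `D ⊂ ℝⁿ` with `R = max r` and any
`r ∈ (0, R)`, the level set `{p ∈ D | r(p) = r}` has empty interior. -/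
theorem level_set_empty_interior {n : ℕ} (D : Set (EuclideanSpace ℝ (Fin n)))
    (hOpen : IsOpen D) (hNe : D.Nonempty) (hBdd : Bornology.IsBounded D)
    (hConv : Convex ℝ D) :
    ∀ r ∈ Set.Ioo (0 : ℝ) (Rmax D),
      interior {p | p ∈ D ∧ inacc D p = r} = ∅ :=
  level_set_empty_interior_general D hBdd hConv
end
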